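/- Let n ≥ 1 and let x, y : {1,…,n} → {0,1}. In the graph CVA(x,y): if there exists an index i with x_i = y_i = 1, then every two vertices are at distance at most 2; if there is no such index, then dist(a, b) ≥ 3. -/

import Mathlib

/-- Vertices of the `Clique VA` construction: `a`, `b`, and `v j` for
`j ∈ {0, 1, …, n+1}` (encoded as `Fin (n+2)`). -/
inductive CVAVert (n : ℕ) : Type
  | a : CVAVert n
  | b : CVAVert n
  | v : Fin (n + 2) → CVAVert n

/-- Edges of `CVA(x, y)`: the `v j` form a clique; `a ~ v 0`, `b ~ v (n+1)`;
for `i ∈ {1, …, n}` (encoded as `i.succ.castSucc`): `a ~ v i` iff `x i = 1` and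
`b ~ v i` iff `y i = 1`; no other edges. -/
def cvaRel {n : ℕ} (x y : Fin n → Fin 2) : CVAVert n → CVAVert n → Prop
  | .v _, .v _ => True
  | .a, .v j => j = 0 ∨ ∃ i : Fin n, x i = 1 ∧ j = i.succ.castSucc
  | .b, .v j => j = Fin.last (n + 1) ∨ ∃ i : Fin n, y i = 1 ∧ j = i.succ.castSucc
  | _, _ => False

/-- The `Clique VA` graph. -/
def CVA {n : ℕ} (x y : Fin n → Fin 2) : SimpleGraph (CVAVert n) :=
  SimpleGraph.fromRel (cvaRel x y)


theorem stmt_5 {n : ℕ} (hn : 1 ≤ n) (x y : Fin n → Fin 2) :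
    ((∃ i, x i = 1 ∧ y i = 1) → ∀ u w : CVAVert n, (CVA x y).dist u w ≤ 2) ∧
    ((¬ ∃ i, x i = 1 ∧ y i = 1) → 3 ≤ (CVA x y).dist CVAVert.a CVAVert.b) := by
  constructor
  · rintro ⟨i, hx, hy⟩ u w
    have hadj : ∀ u : CVAVert n, u ≠ .v i.succ.castSucc →
        (CVA x y).Adj (.v i.succ.castSucc) u := by
      rintro (_|_|j) h
      · simp [CVA, SimpleGraph.fromRel_adj, cvaRel, hx]
      · simp [CVA, SimpleGraph.fromRel_adj, cvaRel, hy]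
      · have : i.succ.castSucc ≠ j := by rintro rfl; exact h rfl
        simpa [CVA, SimpleGraph.fromRel_adj, cvaRel] using this
    rcases eq_or_ne u w with rfl | huw
    · rw [SimpleGraph.dist_self]; omega
    rcases eq_or_ne u (.v i.succ.castSucc) with rfl | hu
    · exact (SimpleGraph.dist_le (hadj w huw.symm).toWalk).trans (by simp)
    rcases eq_or_ne w (.v i.succ.castSucc) with rfl | hw
    · exact (SimpleGraph.dist_le (hadj u hu).symm.toWalk).trans (by simp)
    · exact (SimpleGraph.dist_le (((hadj u hu).symm.toWalk).append
        (hadj w hw).toWalk)).trans (by simp)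
  · intro h
    have hne : (0 : Fin (n+2)) ≠ Fin.last (n+1) := by
      simp [Fin.ext_iff, Fin.last]
    have h1 : (CVA x y).Adj .a (.v 0) := by
      simp [CVA, SimpleGraph.fromRel_adj, cvaRel]
    have h2 : (CVA x y).Adj (.v 0) (.v (Fin.last (n+1))) := by
      simp [CVA, SimpleGraph.fromRel_adj, cvaRel, hne]
    have h3 : (CVA x y).Adj (.v (Fin.last (n+1))) .b := by
      simp [CVA, SimpleGraph.fromRel_adj, cvaRel]
    have hr : (CVA x y).Reachable .a .b := ⟨h1.toWalk.append (h2.toWalk.append h3.toWalk)⟩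
    obtain ⟨p, hp⟩ := hr.exists_walk_length_eq_dist
    by_contra hlt
    push_neg at hlt
    have key : ∀ c : CVAVert n, (CVA x y).Adj .a c → (CVA x y).Adj c .b → False := by
      rintro (_|_|j) ha hb
      · exact (CVA x y).irrefl ha
      · simp [CVA, SimpleGraph.fromRel_adj, cvaRel] at ha
      · simp only [CVA, SimpleGraph.fromRel_adj, cvaRel] at ha hb
        have ha' : (j = 0 ∨ ∃ i : Fin n, x i = 1 ∧ j = i.succ.castSucc) := by tauto
        have hb' : (j = Fin.last (n+1) ∨ ∃ i : Fin n, y i = 1 ∧ j = i.succ.castSucc) := by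
          tauto
        have hsc : ∀ i : Fin n, i.succ.castSucc ≠ 0 := by
          intro i hi
          exact (Fin.succ_ne_zero i) (Fin.castSucc_injective _ hi)
        have hsl : ∀ i : Fin n, i.succ.castSucc ≠ Fin.last (n+1) := fun i =>
          (Fin.castSucc_lt_last _).ne
        rcases ha' with rfl | ⟨i, hxi, rfl⟩
        · rcases hb' with h0 | ⟨i, hyi, hji⟩
          · exact hne h0
          · exact hsc i hji.symm
        · rcases hb' with h0 | ⟨i', hyi, hji⟩
          · exact hsl i h0
          · have hii : i = i' :=
              Fin.succ_injective _ (Fin.castSucc_injective _ hji)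
            exact h ⟨i, hxi, hii ▸ hyi⟩
    cases p with
    | cons h1' q =>
      cases q with
      | nil => simp [CVA, SimpleGraph.fromRel_adj, cvaRel] at h1'
      | cons h2' r =>
        cases r with
        | nil => exact key _ h1' h2'
        | cons h3' s =>
          simp [SimpleGraph.Walk.length_cons] at hp
          omega
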